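/- arXiv:2209.13373 — 2 statements merged into one kernel-verified Lean document; each statement's English description precedes it below -/
import Mathlib

section
/- Let X be a subshift of finite type and f : X → X a cellular automaton with f∘f = f. Then the image f(X) is a subshift of finite type. -/
/-- The shift map on the full shift `A^ℤ`: `σ(x)_i = x_{i+1}`. -/
def shiftMap {A : Type*} (x : ℤ → A) : ℤ → A := fun i => x (i + 1)

/-- A cellular automaton on the full shift `A^ℤ` (with the product topology,
`A` discrete): a continuous map commuting with the shift. -/
def IsCA {A : Type*} [TopologicalSpace A] (f : (ℤ → A) → (ℤ → A)) : Prop :=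
  Continuous f ∧ ∀ x, f (shiftMap x) = shiftMap (f x)

/-- `f` is von Neumann regular in the monoid `End(A^ℤ)` of cellular automata:
there is a CA `h` with `f ∘ h ∘ f = f` and `h ∘ f ∘ h = h`. -/
def IsRegularCA {A : Type*} [TopologicalSpace A] (f : (ℤ → A) → (ℤ → A)) : Prop :=
  ∃ h : (ℤ → A) → (ℤ → A), IsCA h ∧ f ∘ h ∘ f = f ∧ h ∘ f ∘ h = h

/-- A subshift: a closed, shift-invariant subset of the full shift. -/
def IsSubshift {A : Type*} [TopologicalSpace A] (X : Set (ℤ → A)) : Prop :=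
  IsClosed X ∧ shiftMap '' X = X

/-- The finite word `w` occurs as a subword of the bi-infinite sequence `x`. -/
def occursIn {A : Type*} (w : List A) (x : ℤ → A) : Prop :=
  ∃ i : ℤ, ∀ k : Fin w.length, x (i + (k.val : ℤ)) = w.get k

/-- A subshift of finite type: the set of points avoiding a finite set `F` of
forbidden finite words. -/
def IsSFT {A : Type*} (X : Set (ℤ → A)) : Prop :=
  ∃ F : Set (List A), F.Finite ∧ X = {x | ∀ w ∈ F, ¬ occursIn w x}

/-- The language of a subshift: the finite words occurring in its points. -/
def lang {A : Type*} (X : Set (ℤ → A)) : Set (List A) :=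
  {w | ∃ x ∈ X, occursIn w x}

/-- `X` is mixing: for all words `u, v` in the language of `X` there is `N` such
that for every `n ≥ N` some word `u w v` with `|w| = n` is in the language. -/
def IsMixing {A : Type*} (X : Set (ℤ → A)) : Prop :=
  ∀ u ∈ lang X, ∀ v ∈ lang X, ∃ N : ℕ, ∀ n : ℕ, N ≤ n →
    ∃ w : List A, w.length = n ∧ (u ++ w ++ v) ∈ lang X

/-- A cellular automaton on the subshift `X`: a map `X → X` (presented as a map
of the ambient full shift restricted to `X`) that is continuous on `X` and
commutes with the shift on `X`. -/
def IsCAOn {A : Type*} [TopologicalSpace A] (X : Set (ℤ → A))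
    (f : (ℤ → A) → (ℤ → A)) : Prop :=
  Set.MapsTo f X X ∧ ContinuousOn f X ∧ ∀ x ∈ X, f (shiftMap x) = shiftMap (f x)

/-- `f` is von Neumann regular as an element of the monoid `End(X)` of cellular
automata on `X`: there is a CA `h` on `X` with `f∘h∘f = f` and `h∘f∘h = h` as
maps on `X`. -/
def IsRegularCAOn {A : Type*} [TopologicalSpace A] (X : Set (ℤ → A))
    (f : (ℤ → A) → (ℤ → A)) : Prop :=
  ∃ h : (ℤ → A) → (ℤ → A), IsCAOn X h ∧
    (∀ x ∈ X, f (h (f x)) = f x) ∧ (∀ x ∈ X, h (f (h x)) = h x)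

/-!
By the Curtis–Hedlund–Lyndon argument (continuity plus compactness of `X`), `f` is given on `X`
by a local rule of some radius `r`. Since `f` is idempotent, `f(X)` is its set of fixed points in
`X`. If every `(2r+1)`-window of a point `x ∈ X` occurs in `f(X)`, then `x` is fixed: the window
of `x` around `i` occurs around some `j` in a fixed point `y`, so `f x i = f y j = y j = x i`.
Hence `f(X)` is cut out of `X` by forbidding the finitely many `(2r+1)`-words outside its
language.
-/

open Topology

section Cylinder

variable {A : Type*}

def cylinder (x : ℤ → A) (r : ℕ) : Set (ℤ → A) :=
  {y | ∀ k : ℤ, k.natAbs ≤ r → y k = x k}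

lemma cylinder_anti (x : ℤ → A) {r s : ℕ} (hrs : r ≤ s) : cylinder x s ⊆ cylinder x r :=
  fun _ hy k hk => hy k (hk.trans hrs)

variable [TopologicalSpace A]

lemma exists_cylinder_subset_of_mem_nhds {x : ℤ → A} {U : Set (ℤ → A)} (hU : U ∈ 𝓝 x) :
    ∃ r : ℕ, cylinder x r ⊆ U := by
  rw [nhds_pi, Filter.mem_pi] at hU
  obtain ⟨I, hI, t, ht, hIt⟩ := hU
  obtain ⟨r, hr⟩ := (hI.image Int.natAbs).bddAbove
  refine ⟨r, fun y hy => hIt fun k hk => ?_⟩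
  rw [hy k (hr ⟨k, hk, rfl⟩)]
  exact mem_of_mem_nhds (ht k)

variable [DiscreteTopology A]

lemma cylinder_mem_nhds (x : ℤ → A) (r : ℕ) : cylinder x r ∈ 𝓝 x := by
  have hfin : {k : ℤ | k.natAbs ≤ r}.Finite :=
    (Set.finite_Icc (-(r : ℤ)) r).subset fun k (hk : k.natAbs ≤ r) => by
      simp only [Set.mem_Icc]; omega
  filter_upwards [set_pi_mem_nhds hfin fun k _ => (isOpen_discrete {x k}).mem_nhds rfl]
    with y hy k hk using hy k hk

theorem IsCompact.exists_radius_of_continuousOn {B : Type*} [TopologicalSpace B]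
    [DiscreteTopology B] {X : Set (ℤ → A)} {g : (ℤ → A) → B} (hX : IsCompact X)
    (hg : ContinuousOn g X) :
    ∃ r : ℕ, ∀ x ∈ X, ∀ y ∈ X, y ∈ cylinder x r → g y = g x := by
  have hloc : ∀ x ∈ X, ∃ r : ℕ, ∀ y ∈ X, y ∈ cylinder x r → g y = g x := by
    intro x hx
    obtain ⟨U, hU, hUX⟩ := mem_nhdsWithin_iff_exists_mem_nhds_inter.1
      (hg x hx ((isOpen_discrete {g x}).mem_nhds rfl))
    obtain ⟨r, hr⟩ := exists_cylinder_subset_of_mem_nhds hU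
    exact ⟨r, fun y hy hyx => hUX ⟨hr hyx, hy⟩⟩
  choose r hr using hloc
  obtain ⟨t, ht⟩ := hX.elim_nhds_subcover' (fun x hx => cylinder x (r x hx))
    fun x hx => cylinder_mem_nhds x _
  refine ⟨t.sup fun z => r z.1 z.2, fun x hx y hy hxy => ?_⟩
  obtain ⟨z, hzt, hxz⟩ := Set.mem_iUnion₂.1 (ht hx)
  have hyz : y ∈ cylinder z.1 (r z.1 z.2) := fun k hk =>
    (cylinder_anti x (Finset.le_sup (f := fun z : X => r z.1 z.2) hzt) hxy k hk).trans (hxz k hk)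
  rw [hr z.1 z.2 y hy hyz, hr z.1 z.2 x hx hxz]

end Cylinder

section Translate

variable {A : Type*}

def shiftBy (n : ℤ) (x : ℤ → A) : ℤ → A := fun i => x (i + n)

lemma shiftBy_zero (x : ℤ → A) : shiftBy 0 x = x := by
  funext i; simp [shiftBy]

lemma shiftBy_add_one (n : ℤ) (x : ℤ → A) : shiftBy (n + 1) x = shiftMap (shiftBy n x) := by
  funext i; simp only [shiftBy, shiftMap]; ring_nf

lemma shiftMap_shiftBy_sub_one (n : ℤ) (x : ℤ → A) :
    shiftMap (shiftBy (n - 1) x) = shiftBy n x := by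
  rw [← shiftBy_add_one, sub_add_cancel]

lemma shiftMap_injective : Function.Injective (shiftMap : (ℤ → A) → ℤ → A) := by
  intro x y h
  funext i
  simpa [shiftMap] using congrFun h (i - 1)

variable {X : Set (ℤ → A)} {f : (ℤ → A) → ℤ → A}

lemma shiftBy_mem (hX : shiftMap '' X = X) (n : ℤ) {x : ℤ → A} (hx : x ∈ X) :
    shiftBy n x ∈ X := by
  induction n using Int.induction_on with
  | zero => rwa [shiftBy_zero]
  | succ k ih => rw [shiftBy_add_one, ← hX]; exact Set.mem_image_of_mem _ ih
  | pred k ih =>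
    rw [← hX, ← shiftMap_shiftBy_sub_one] at ih
    obtain ⟨y, hy, hyx⟩ := ih
    rwa [← shiftMap_injective hyx]

lemma map_shiftBy (hX : shiftMap '' X = X) (hf : ∀ x ∈ X, f (shiftMap x) = shiftMap (f x))
    (n : ℤ) {x : ℤ → A} (hx : x ∈ X) : f (shiftBy n x) = shiftBy n (f x) := by
  induction n using Int.induction_on with
  | zero => rw [shiftBy_zero, shiftBy_zero]
  | succ k ih => rw [shiftBy_add_one, shiftBy_add_one, hf _ (shiftBy_mem hX _ hx), ih]
  | pred k ih =>
    apply shiftMap_injective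
    rw [← hf _ (shiftBy_mem hX _ hx), shiftMap_shiftBy_sub_one, shiftMap_shiftBy_sub_one, ih]

end Translate

section LocalRule

variable {A : Type*} {X : Set (ℤ → A)} {f : (ℤ → A) → ℤ → A}

def HasRadius (X : Set (ℤ → A)) (f : (ℤ → A) → ℤ → A) (r : ℕ) : Prop :=
  ∀ x ∈ X, ∀ y ∈ X, ∀ i j : ℤ,
    (∀ k : ℤ, k.natAbs ≤ r → y (j + k) = x (i + k)) → f y j = f x i

theorem IsCAOn.exists_hasRadius [Finite A] [TopologicalSpace A] [DiscreteTopology A]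
    (hf : IsCAOn X f) (hX : IsSubshift X) : ∃ r, HasRadius X f r := by
  obtain ⟨r, hr⟩ := hX.1.isCompact.exists_radius_of_continuousOn
    ((continuous_apply 0).comp_continuousOn hf.2.1)
  refine ⟨r, fun x hx y hy i j hxy => ?_⟩
  have h := hr (shiftBy i x) (shiftBy_mem hX.2 i hx) (shiftBy j y) (shiftBy_mem hX.2 j hy)
    fun k hk => by simpa [shiftBy, add_comm] using hxy k hk
  simpa [map_shiftBy hX.2 hf.2.2 _ hx, map_shiftBy hX.2 hf.2.2 _ hy, shiftBy] using h

def window (x : ℤ → A) (i : ℤ) (r : ℕ) : List A :=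
  List.ofFn fun k : Fin (2 * r + 1) => x (i - r + k)

lemma length_window (x : ℤ → A) (i : ℤ) (r : ℕ) : (window x i r).length = 2 * r + 1 :=
  List.length_ofFn

lemma occursIn_window (x : ℤ → A) (i : ℤ) (r : ℕ) : occursIn (window x i r) x :=
  ⟨i - r, fun ⟨k, _⟩ => by simp only [window, List.get_eq_getElem, List.getElem_ofFn]⟩

lemma exists_agree_of_occursIn_window {x y : ℤ → A} {i : ℤ} {r : ℕ}
    (h : occursIn (window x i r) y) :
    ∃ j, ∀ k : ℤ, k.natAbs ≤ r → y (j + k) = x (i + k) := by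
  obtain ⟨j, hj⟩ := h
  refine ⟨j + r, fun k hk => ?_⟩
  have hlt : (k + r).toNat < (window x i r).length := by rw [length_window]; omega
  have := hj ⟨_, hlt⟩
  simp only [window, List.get_eq_getElem, List.getElem_ofFn] at this
  rw [Int.toNat_of_nonneg (by omega)] at this
  convert this using 2 <;> ring

lemma HasRadius.apply_eq_of_occursIn_window {r : ℕ} (hf : HasRadius X f r) {x y : ℤ → A}
    (hx : x ∈ X) (hy : y ∈ X) (hfy : f y = y) {i : ℤ} (h : occursIn (window x i r) y) :
    f x i = x i := by
  obtain ⟨j, hj⟩ := exists_agree_of_occursIn_window h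
  calc f x i = f y j := (hf x hx y hy i j hj).symm
    _ = y j := by rw [hfy]
    _ = x i := by simpa using hj 0 (by simp)

end LocalRule

theorem IsSFT.of_subset_of_forall_occursIn {A : Type*} [Finite A] {X Y : Set (ℤ → A)}
    (hX : IsSFT X) (hYX : Y ⊆ X) (n : ℕ)
    (hY : ∀ x ∈ X, (∀ w : List A, w.length = n → occursIn w x → w ∈ lang Y) → x ∈ Y) :
    IsSFT Y := by
  obtain ⟨F, hF, rfl⟩ := hX
  refine ⟨F ∪ {w | w.length = n ∧ w ∉ lang Y},
    hF.union ((List.finite_length_eq A n).subset fun w hw => hw.1), subset_antisymm ?_ ?_⟩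
  · rintro y hy w (hw | ⟨-, hwY⟩) hocc
    exacts [hYX hy w hw hocc, hwY ⟨y, hy, hocc⟩]
  · intro x hx
    refine hY x (fun w hw hocc => hx w (Or.inl hw) hocc) fun w hw hocc => ?_
    by_contra hwY
    exact hx w (Or.inr ⟨hw, hwY⟩) hocc

/-- If `X` is an SFT and `f : X → X` is an idempotent cellular automaton
(`f ∘ f = f` on `X`), then the image `f(X)` is an SFT. -/
theorem stmt6 {A : Type*} [Finite A] [TopologicalSpace A] [DiscreteTopology A]
    (X : Set (ℤ → A)) (hX : IsSubshift X) (hXsft : IsSFT X)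
    (f : (ℤ → A) → (ℤ → A)) (hf : IsCAOn X f)
    (hidem : ∀ x ∈ X, f (f x) = f x) :
    IsSFT (f '' X) := by
  obtain ⟨r, hr⟩ := hf.exists_hasRadius hX
  refine hXsft.of_subset_of_forall_occursIn hf.1.image_subset (2 * r + 1) fun x hx hwin => ?_
  have hfix : f x = x := funext fun i => by
    obtain ⟨_, ⟨z, hz, rfl⟩, hocc⟩ := hwin _ (length_window x i r) (occursIn_window x i r)
    exact hr.apply_eq_of_occursIn_window hx (hf.1 hz) (hidem z hz) hocc
  exact ⟨x, hx, hfix⟩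
end

section
/- The elementary cellular automaton with Wolfram number 9, i.e. the CA f on {0,1}^ℤ with f(x)_i = 1 if and only if (x_{i-1}, x_i, x_{i+1}) ∈ {(0,0,0), (0,1,1)}, is not von Neumann regular in End({0,1}^ℤ). -/
/-!
Let `h` be a CA with `f ∘ h ∘ f = f`. Commuting with the shift, `h` maps `0^ℤ` to a constant
point `u`, and `f u = f (h (f 1^ℤ)) = f 1^ℤ = 0^ℤ` forces `u = 1^ℤ`. Take `y` in the image of `f`
with `y₀ = y₁ = 1` and `yᵢ = 0` for `i ≥ 3`. Then `z := h y` satisfies `f z = y`, and since the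
shifts `σⁿ y` converge to `0^ℤ`, continuity of `h` makes `z` eventually `1`. But `y₀ = y₁ = 1`
forces `z₂ = 0`, and to the right of that `0` a preimage of `y` cannot contain the word `11`:
the first occurrence would be preceded by a `0`, and `f` would output a `1` there.
-/

open Filter Topology

section CellularAutomaton

variable {A : Type*}

theorem shiftMap_iterate_apply (x : ℤ → A) (n : ℕ) (i : ℤ) :
    shiftMap^[n] x i = x (i + n) := by
  induction n generalizing i with
  | zero => simp
  | succ n ih =>
    rw [Function.iterate_succ_apply', shiftMap, ih]
    push_cast
    ring_nf

theorem eq_const_of_shiftMap_eq {x : ℤ → A} (hx : shiftMap x = x) : x = fun _ => x 0 := by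
  have step : ∀ i, x (i + 1) = x i := fun i => congrFun hx i
  funext i
  induction i using Int.induction_on with
  | zero => rfl
  | succ k ih => rw [step, ih]
  | pred k ih => rw [← ih, ← step, sub_add_cancel]

variable [TopologicalSpace A] {h : (ℤ → A) → (ℤ → A)}

theorem IsCA.map_const (hh : IsCA h) (a : A) : ∃ b, h (fun _ => a) = fun _ => b :=
  ⟨_, eq_const_of_shiftMap_eq (hh.2 fun _ => a).symm⟩

theorem IsCA.eventually_apply_eq [DiscreteTopology A] (hh : IsCA h) {y : ℤ → A} {a : A}
    (hy : ∀ᶠ i in atTop, y i = a) : ∀ᶠ n : ℕ in atTop, h y n = h (fun _ => a) 0 := by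
  have hshift : Tendsto (fun n : ℕ => shiftMap^[n] y) atTop (𝓝 fun _ => a) := by
    refine tendsto_pi_nhds.2 fun j => ?_
    simp only [nhds_discrete, tendsto_pure, shiftMap_iterate_apply]
    exact (tendsto_atTop_add_const_left _ j tendsto_natCast_atTop_atTop).eventually hy
  have hlim := ((continuous_apply 0).tendsto _).comp ((hh.1.tendsto _).comp hshift)
  rw [nhds_discrete, tendsto_pure] at hlim
  filter_upwards [hlim] with n hn
  rwa [Function.comp_apply, Function.comp_apply, (Function.Commute.iterate_right hh.2 n) y,
    shiftMap_iterate_apply, zero_add] at hn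

end CellularAutomaton

section Wolfram9

def wolfram9 (x : ℤ → Bool) : ℤ → Bool := fun i => !x (i - 1) && x i == x (i + 1)

theorem wolfram9_eq_true_iff (x : ℤ → Bool) (i : ℤ) :
    wolfram9 x i = true ↔
      (x (i - 1), x i, x (i + 1)) = (false, false, false) ∨
      (x (i - 1), x i, x (i + 1)) = (false, true, true) := by
  simp only [wolfram9]
  cases x (i - 1) <;> cases x i <;> cases x (i + 1) <;> decide

theorem wolfram9_const (b : Bool) : wolfram9 (fun _ => b) = fun _ => !b := by
  funext i
  cases b <;> rfl

theorem wolfram9_no_adjacent_trues {z : ℤ → Bool} {m : ℤ} (hm : z m = false)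
    (hz : ∀ i > m, wolfram9 z i = false) : ∀ n ≥ m, z n = false ∨ z (n + 1) = false := by
  intro n hn
  induction n, hn using Int.leInduction with
  | base => exact Or.inl hm
  | succ n hn ih =>
    by_contra! hn'
    simp only [ne_eq, Bool.not_eq_false] at hn'
    have hzn : z n = false := ih.resolve_right (by simp [hn'.1])
    have := hz (n + 1) (by omega)
    simp [wolfram9, hzn, hn'.1, hn'.2] at this

/-- Its image under `wolfram9` is `true` at `0` and `1` and `false` from `3` on. -/
def wolfram9Seed : ℤ → Bool := fun i => decide (2 < i ∧ i % 2 = 1)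

theorem wolfram9_wolfram9Seed_of_three_le {i : ℤ} (hi : 3 ≤ i) :
    wolfram9 wolfram9Seed i = false := by
  have hne : wolfram9Seed i ≠ wolfram9Seed (i + 1) := by
    simp only [wolfram9Seed, ne_eq, decide_eq_decide]
    omega
  simp [wolfram9, hne]

theorem not_eventually_true_of_wolfram9_eq_wolfram9Seed {z : ℤ → Bool}
    (hz : wolfram9 z = wolfram9 wolfram9Seed) : ¬ ∀ᶠ n : ℕ in atTop, z n = true := by
  have h0 : wolfram9 z 0 = true := by rw [hz]; decide
  have h1 : wolfram9 z 1 = true := by rw [hz]; decide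
  have hz2 : z 2 = false := by
    simp only [wolfram9, Bool.and_eq_true, Bool.not_eq_true', beq_iff_eq] at h0 h1
    norm_num at h0 h1
    rw [← h1.2, ← h0.2]
    exact h1.1
  have hpairs := wolfram9_no_adjacent_trues hz2 fun i hi => by
    rw [hz]; exact wolfram9_wolfram9Seed_of_three_le hi
  intro hev
  obtain ⟨N, hN⟩ := eventually_atTop.1 hev
  have h2 : z (N + 2) = true := by exact_mod_cast hN (N + 2) (by omega)
  have h3 : z (N + 2 + 1) = true := by exact_mod_cast hN (N + 3) (by omega)
  rcases hpairs (N + 2) (by omega) with h | h <;> simp_all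

end Wolfram9

/-- The elementary cellular automaton with Wolfram number 9 is not von
Neumann regular in End({0,1}^ℤ). Here 1 is represented by `true`. -/
theorem stmt10 (f : (ℤ → Bool) → (ℤ → Bool))
    (hf : ∀ (x : ℤ → Bool) (i : ℤ), f x i = true ↔
      (x (i - 1), x i, x (i + 1)) = (false, false, false) ∨
      (x (i - 1), x i, x (i + 1)) = (false, true, true)) :
    ¬ IsRegularCA f := by
  obtain rfl : f = wolfram9 := funext fun x => funext fun i =>
    Bool.eq_iff_iff.2 ((hf x i).trans (wolfram9_eq_true_iff x i).symm)
  rintro ⟨h, hh, hfhf, -⟩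
  obtain ⟨b, hb⟩ := hh.map_const false
  have hb_eq : b = true := by
    have := congrFun (congrFun hfhf fun _ => true) 0
    simpa [wolfram9_const, hb] using this
  apply not_eventually_true_of_wolfram9_eq_wolfram9Seed (congrFun hfhf wolfram9Seed)
  have hy : ∀ᶠ i in atTop, wolfram9 wolfram9Seed i = false :=
    eventually_atTop.2 ⟨3, fun _ => wolfram9_wolfram9Seed_of_three_le⟩
  simpa [hb, hb_eq] using hh.eventually_apply_eq hy
end
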